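/- Let z be an integer that is a perfect square, and suppose a root of unity θ with θ ≠ ±1 satisfies zθ² + (4 − z)θ + z = 0. Then z = 4 and θ² + 1 = 0, i.e., θ is a primitive fourth root of unity. -/

import Mathlib

/-! Dividing the equation by `z θ` gives `θ + θ⁻¹ = (z - 4) / z`. The left side is an algebraic
integer and the right side is rational, so it is an integer `a`, and `z (1 - a) = 4`. A
square dividing `4` is `1` or `4`; `z = 1` would give `θ + θ⁻¹ = -3`, impossible for `‖θ‖ = 1`. -/

theorem isIntegral_add_inv_of_pow_eq_one {K : Type*} [Field K] {θ : K} {k : ℕ}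
    (hk : 0 < k) (hroot : θ ^ k = 1) : IsIntegral ℤ (θ + θ⁻¹) := by
  have hθ : IsIntegral ℤ (θ ^ k) := hroot ▸ isIntegral_one
  have hθinv : IsIntegral ℤ (θ⁻¹ ^ k) := by
    rw [inv_pow, hroot, inv_one]
    exact isIntegral_one
  exact (hθ.of_pow hk).add (hθinv.of_pow hk)

theorem exists_int_eq_of_isIntegral_ratCast {K : Type*} [Field K] [CharZero K] {q : ℚ}
    (hq : IsIntegral ℤ (q : K)) : ∃ a : ℤ, q = a := by
  rw [← eq_ratCast (algebraMap ℚ K), isIntegral_algebraMap_iff (algebraMap ℚ K).injective] at hq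
  obtain ⟨a, ha⟩ := IsIntegrallyClosed.isIntegral_iff.mp hq
  exact ⟨a, by rw [← ha, eq_intCast]⟩

theorem norm_add_inv_le_two {θ : ℂ} (hθ : ‖θ‖ = 1) : ‖θ + θ⁻¹‖ ≤ 2 :=
  calc ‖θ + θ⁻¹‖ ≤ ‖θ‖ + ‖θ⁻¹‖ := norm_add_le _ _
    _ = 2 := by rw [norm_inv, hθ]; norm_num

theorem sq_eq_one_or_four_of_sq_dvd_four {m : ℤ} (h : m ^ 2 ∣ 4) : m ^ 2 = 1 ∨ m ^ 2 = 4 := by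
  have hle : m ^ 2 ≤ 4 := Int.le_of_dvd (by norm_num) h
  obtain ⟨hlo, hhi⟩ : -2 ≤ m ∧ m ≤ 2 := ⟨by nlinarith, by nlinarith⟩
  interval_cases m <;> revert h <;> decide

theorem add_inv_eq_of_mul_sq_add_mul_add_eq_zero {K : Type*} [Field K] {z θ : K} (hz : z ≠ 0)
    (hθ : θ ≠ 0) (heq : z * θ ^ 2 + (4 - z) * θ + z = 0) : θ + θ⁻¹ = (z - 4) / z := by
  field_simp
  linear_combination heq

theorem stmt_6_general (z : ℤ) (hsq : ∃ m : ℤ, z = m ^ 2) (θ : ℂ) (k : ℕ) (hk : 0 < k)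
    (hroot : θ ^ k = 1)
    (heq : (z : ℂ) * θ ^ 2 + (4 - (z : ℂ)) * θ + (z : ℂ) = 0) :
    z = 4 ∧ θ ^ 2 + 1 = 0 := by
  obtain ⟨m, hm⟩ := hsq
  have hθ : θ ≠ 0 := by
    rintro rfl
    simp [hk.ne'] at hroot
  have hz : z ≠ 0 := by
    rintro rfl
    simp [hθ] at heq
  have hsum : θ + θ⁻¹ = (((z - 4) / z : ℚ) : ℂ) := by
    push_cast
    exact add_inv_eq_of_mul_sq_add_mul_add_eq_zero (by exact_mod_cast hz) hθ heq
  obtain ⟨a, ha⟩ := exists_int_eq_of_isIntegral_ratCast (K := ℂ)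
    (hsum ▸ isIntegral_add_inv_of_pow_eq_one hk hroot)
  have haz : z * a = z - 4 := by
    field_simp at ha
    exact_mod_cast ha.symm
  have hdvd : m ^ 2 ∣ 4 := hm ▸ ⟨1 - a, by linarith⟩
  rcases hm ▸ sq_eq_one_or_four_of_sq_dvd_four hdvd with h | h
  · have hnorm := norm_add_inv_le_two (Complex.norm_eq_one_of_pow_eq_one hroot hk.ne')
    rw [hsum, h] at hnorm
    norm_num at hnorm
  · subst h
    refine ⟨rfl, ?_⟩
    push_cast at heq
    linear_combination heq / 4

theorem stmt_6 (z : ℤ) (hsq : ∃ m : ℤ, z = m ^ 2) (θ : ℂ) (k : ℕ) (hk : 0 < k)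
    (hroot : θ ^ k = 1) (h1 : θ ≠ 1) (h2 : θ ≠ -1)
    (heq : (z : ℂ) * θ ^ 2 + (4 - (z : ℂ)) * θ + (z : ℂ) = 0) :
    z = 4 ∧ θ ^ 2 + 1 = 0 :=
  stmt_6_general z hsq θ k hk hroot heq
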